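/- arXiv:2604.09532 — 5 statements merged into one kernel-verified Lean document; each statement's English description precedes it below -/
import Mathlib

section
/- Let M be a positive integer, let a : Fin M → ℝ be a vector of attention scores, and let S ⊆ Fin M be a nonempty set of informative indices with complement Sᶜ. Suppose there is Δ > 0 such that a m ≥ a r + Δ for every m ∈ S and every r ∉ S. Define the softmax weights α m = exp(a m) / (∑_{k} exp(a k)). Then the total softmax mass on the non-informative indices satisfies ∑_{r ∉ S} α r ≤ (|Sᶜ| / |S|) · exp(−Δ); in particular, it decays exponentially in the attention margin Δ. -/
/-- With a positive attention margin `Δ` between informative indices `S` and the rest,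
the total softmax mass on the non-informative indices is at most `(|Sᶜ|/|S|)·exp(−Δ)`. -/
theorem softmax_mass_complement_le
    (M : ℕ) (hM : 0 < M) (a : Fin M → ℝ) (S : Finset (Fin M)) (hS : S.Nonempty)
    (Δ : ℝ) (hΔ : 0 < Δ)
    (hmargin : ∀ m ∈ S, ∀ r ∉ S, a r + Δ ≤ a m) :
    ∑ r ∈ Sᶜ, Real.exp (a r) / (∑ k, Real.exp (a k))
      ≤ ((Sᶜ.card : ℝ) / (S.card : ℝ)) * Real.exp (-Δ) := by
  set Z : ℝ := ∑ k, Real.exp (a k) with hZ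
  have hZpos : 0 < Z := Finset.sum_pos (fun k _ => Real.exp_pos _) ⟨hS.choose, Finset.mem_univ _⟩
  have hcard : (0 : ℝ) < (S.card : ℝ) := by exact_mod_cast Finset.card_pos.mpr hS
  set T : ℝ := ∑ m ∈ S, Real.exp (a m) with hT
  set N : ℝ := ∑ r ∈ Sᶜ, Real.exp (a r) with hN
  have hTZ : T ≤ Z := by
    rw [hT, hZ]
    exact Finset.sum_le_sum_of_subset_of_nonneg (Finset.subset_univ S)
      (fun i _ _ => (Real.exp_pos _).le)
  have hkey : N * S.card ≤ (Sᶜ.card : ℝ) * Real.exp (-Δ) * T := by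
    have h1 : ∀ r ∈ Sᶜ, Real.exp (a r) * S.card ≤ Real.exp (-Δ) * T := by
      intro r hr
      rw [Finset.mem_compl] at hr
      have : (Real.exp (a r) * S.card : ℝ) = ∑ m ∈ S, Real.exp (a r) := by
        simp [mul_comm]
      rw [this, Finset.mul_sum]
      refine Finset.sum_le_sum fun m hm => ?_
      rw [← Real.exp_add]
      exact Real.exp_le_exp.mpr (by linarith [hmargin m hm r hr])
    calc N * S.card = ∑ r ∈ Sᶜ, Real.exp (a r) * S.card := by rw [hN, Finset.sum_mul]
      _ ≤ ∑ _r ∈ Sᶜ, Real.exp (-Δ) * T := Finset.sum_le_sum h1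
      _ = (Sᶜ.card : ℝ) * Real.exp (-Δ) * T := by
          rw [Finset.sum_const, nsmul_eq_mul, mul_assoc]
  have hNZ : ∑ r ∈ Sᶜ, Real.exp (a r) / Z = N / Z := by rw [hN, Finset.sum_div]
  rw [hNZ, div_le_iff₀ hZpos, div_mul_eq_mul_div, div_mul_eq_mul_div, le_div_iff₀ hcard]
  have hTZ' : (Sᶜ.card : ℝ) * Real.exp (-Δ) * T ≤ (Sᶜ.card : ℝ) * Real.exp (-Δ) * Z := by
    apply mul_le_mul_of_nonneg_left hTZ
    positivity
  nlinarith
end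

section
/- Let E be a real normed vector space, let M be a positive integer, let z : Fin M → E, let a : Fin M → ℝ be attention scores, and let α m = exp(a m) / (∑_{k} exp(a k)) be the softmax weights. Let S ⊆ Fin M be nonempty, and suppose Δ > 0 satisfies a m ≥ a r + Δ for every m ∈ S and r ∉ S. Let s ∈ E and ε ≥ 0, R ≥ 0 satisfy ‖z m − s‖ ≤ ε for every m ∈ S and ‖z r − s‖ ≤ R for every r ∉ S. Then the attention output A = ∑_{m} α m · z m satisfies ‖A − s‖ ≤ ε + (|Sᶜ| / |S|) · R · exp(−Δ). -/
/-- Cross-modal attention with softmax weights and a positive score margin `Δ` over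
irrelevant tokens yields a denoised approximation of the clean semantics `s`:
the attention output `A = ∑ α m • z m` satisfies `‖A − s‖ ≤ ε + (|Sᶜ|/|S|)·R·exp(−Δ)`. -/
theorem attention_output_denoised_approximation
    {E : Type*} [NormedAddCommGroup E] [NormedSpace ℝ E]
    (M : ℕ) (hM : 0 < M) (z : Fin M → E) (a : Fin M → ℝ)
    (S : Finset (Fin M)) (hS : S.Nonempty)
    (Δ : ℝ) (hΔ : 0 < Δ)
    (hmargin : ∀ m ∈ S, ∀ r ∉ S, a r + Δ ≤ a m)
    (s : E) (ε R : ℝ) (hε : 0 ≤ ε) (hR : 0 ≤ R)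
    (h_in : ∀ m ∈ S, ‖z m - s‖ ≤ ε)
    (h_out : ∀ r ∉ S, ‖z r - s‖ ≤ R) :
    ‖(∑ m, (Real.exp (a m) / (∑ k, Real.exp (a k))) • z m) - s‖
      ≤ ε + ((Sᶜ.card : ℝ) / (S.card : ℝ)) * R * Real.exp (-Δ) := by
  set T : ℝ := ∑ k, Real.exp (a k) with hT
  have hTpos : 0 < T := Finset.sum_pos (fun k _ => Real.exp_pos _) ⟨⟨0, hM⟩, Finset.mem_univ _⟩
  set α : Fin M → ℝ := fun m => Real.exp (a m) / T with hα
  have hαnn : ∀ m, 0 ≤ α m := fun m => div_nonneg (Real.exp_pos _).le hTpos.le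
  have hαsum : ∑ m, α m = 1 := by
    rw [← Finset.sum_div]
    exact div_self hTpos.ne'
  have hScard : 0 < (S.card : ℝ) := by exact_mod_cast Finset.card_pos.mpr hS
  -- key bound on irrelevant weights
  have hkey : ∀ r ∉ S, α r ≤ Real.exp (-Δ) / S.card := by
    intro r hr
    have h1 : (S.card : ℝ) * Real.exp (a r) ≤ Real.exp (-Δ) * T := by
      calc (S.card : ℝ) * Real.exp (a r) = ∑ m ∈ S, Real.exp (a r) := by
            rw [Finset.sum_const, nsmul_eq_mul]
        _ ≤ ∑ m ∈ S, Real.exp (-Δ) * Real.exp (a m) := by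
            apply Finset.sum_le_sum
            intro m hm
            rw [← Real.exp_add]
            exact Real.exp_le_exp.mpr (by linarith [hmargin m hm r hr])
        _ = Real.exp (-Δ) * ∑ m ∈ S, Real.exp (a m) := by rw [Finset.mul_sum]
        _ ≤ Real.exp (-Δ) * T := by
            apply mul_le_mul_of_nonneg_left _ (Real.exp_pos _).le
            exact Finset.sum_le_sum_of_subset_of_nonneg (Finset.subset_univ S)
              (fun k _ _ => (Real.exp_pos _).le)
    rw [div_le_div_iff₀ hTpos hScard]
    nlinarith
  have hrw : (∑ m, α m • z m) - s = ∑ m, α m • (z m - s) := by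
    simp only [smul_sub, Finset.sum_sub_distrib, ← Finset.sum_smul, hαsum, one_smul]
  rw [hrw]
  calc ‖∑ m, α m • (z m - s)‖ ≤ ∑ m, ‖α m • (z m - s)‖ := norm_sum_le _ _
    _ = ∑ m, α m * ‖z m - s‖ := by
        apply Finset.sum_congr rfl
        intro m _
        rw [norm_smul, Real.norm_eq_abs, abs_of_nonneg (hαnn m)]
    _ = (∑ m ∈ S, α m * ‖z m - s‖) + ∑ m ∈ Sᶜ, α m * ‖z m - s‖ := by
        rw [Finset.sum_add_sum_compl]
    _ ≤ (∑ m ∈ S, α m * ε) + ∑ m ∈ Sᶜ, (Real.exp (-Δ) / S.card) * R := by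
        apply add_le_add
        · exact Finset.sum_le_sum fun m hm =>
            mul_le_mul_of_nonneg_left (h_in m hm) (hαnn m)
        · refine Finset.sum_le_sum fun m hm => ?_
          rw [Finset.mem_compl] at hm
          exact mul_le_mul (hkey m hm) (h_out m hm) (norm_nonneg _)
            (div_nonneg (Real.exp_pos _).le hScard.le)
    _ ≤ ε + ((Sᶜ.card : ℝ) / (S.card : ℝ)) * R * Real.exp (-Δ) := by
        rw [← Finset.sum_mul, Finset.sum_const, nsmul_eq_mul]
        have h2 : ∑ m ∈ S, α m ≤ 1 := by
          rw [← hαsum]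
          exact Finset.sum_le_sum_of_subset_of_nonneg (Finset.subset_univ S)
            (fun k _ _ => hαnn k)
        have h3 : (Sᶜ.card : ℝ) * (Real.exp (-Δ) / ↑S.card * R)
            = (Sᶜ.card : ℝ) / (S.card : ℝ) * R * Real.exp (-Δ) := by ring
        rw [h3]
        have h4 : (∑ i ∈ S, α i) * ε ≤ ε := by nlinarith
        linarith
end

section
/- (Theorem 1, honest form.) Let E and E' be real normed vector spaces, let M be a positive integer, let z : Fin M → E, let a : Fin M → ℝ be attention scores with softmax weights α m = exp(a m) / (∑_{k} exp(a k)), and let S ⊆ Fin M be nonempty. Suppose Δ > 0 satisfies a m ≥ a r + Δ for every m ∈ S and r ∉ S, and s ∈ E, ε ≥ 0, R ≥ 0 satisfy ‖z m − s‖ ≤ ε for m ∈ S and ‖z r − s‖ ≤ R for r ∉ S. Let F : E → E' be Lipschitz with constant L_mod ≥ 0. Then, writing A = ∑_{m} α m · z m, the modulated outputs satisfy ‖F(A) − F(s)‖ ≤ L_mod · (ε + (|Sᶜ| / |S|) · R · exp(−Δ)). -/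
/-- Theorem 1 (honest form): composing the cross-modal attention aggregation with a
Lipschitz modulation map `F` (constant `L_mod`), the image-conditioned prompt `F(A)`
deviates from the ideal clean prompt `F(s)` by at most
`L_mod · (ε + (|Sᶜ|/|S|)·R·exp(−Δ))`. -/
theorem modulated_prompt_deviation_bound
    {E E' : Type*} [NormedAddCommGroup E] [NormedSpace ℝ E]
    [NormedAddCommGroup E'] [NormedSpace ℝ E']
    (M : ℕ) (hM : 0 < M) (z : Fin M → E) (a : Fin M → ℝ)
    (S : Finset (Fin M)) (hS : S.Nonempty)
    (Δ : ℝ) (hΔ : 0 < Δ)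
    (hmargin : ∀ m ∈ S, ∀ r ∉ S, a r + Δ ≤ a m)
    (s : E) (ε R : ℝ) (hε : 0 ≤ ε) (hR : 0 ≤ R)
    (h_in : ∀ m ∈ S, ‖z m - s‖ ≤ ε)
    (h_out : ∀ r ∉ S, ‖z r - s‖ ≤ R)
    (F : E → E') (L_mod : ℝ) (hL : 0 ≤ L_mod)
    (hF : ∀ x y : E, ‖F x - F y‖ ≤ L_mod * ‖x - y‖) :
    ‖F (∑ m, (Real.exp (a m) / (∑ k, Real.exp (a k))) • z m) - F s‖
      ≤ L_mod * (ε + ((Sᶜ.card : ℝ) / (S.card : ℝ)) * R * Real.exp (-Δ)) := by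
  set T : ℝ := ∑ k, Real.exp (a k) with hT
  have hTpos : 0 < T := Finset.sum_pos (fun k _ => Real.exp_pos _)
    (Finset.univ_nonempty_iff.mpr ⟨⟨0, hM⟩⟩)
  set α : Fin M → ℝ := fun m => Real.exp (a m) / T with hα
  have hαnn : ∀ m, 0 ≤ α m := fun m => div_nonneg (Real.exp_pos _).le hTpos.le
  have hαsum : ∑ m, α m = 1 := by
    rw [← Finset.sum_div, ← hT, div_self hTpos.ne']
  have hScard : (0 : ℝ) < (S.card : ℝ) := by
    exact_mod_cast Finset.card_pos.mpr hS
  -- bound on each outside weight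
  have hout_w : ∀ r ∉ S, α r ≤ Real.exp (-Δ) / (S.card : ℝ) := by
    intro r hr
    have h1 : (S.card : ℝ) * Real.exp (a r) ≤ Real.exp (-Δ) * T := by
      have h2 : ∑ m ∈ S, Real.exp (a r) ≤ ∑ m ∈ S, Real.exp (-Δ) * Real.exp (a m) := by
        refine Finset.sum_le_sum fun m hm => ?_
        rw [← Real.exp_add]
        exact Real.exp_le_exp.mpr (by linarith [hmargin m hm r hr])
      have h3 : ∑ m ∈ S, Real.exp (a m) ≤ T := by
        refine Finset.sum_le_sum_of_subset_of_nonneg (Finset.subset_univ S)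
          fun k _ _ => (Real.exp_pos _).le
      calc (S.card : ℝ) * Real.exp (a r) = ∑ m ∈ S, Real.exp (a r) := by
            rw [Finset.sum_const, nsmul_eq_mul]
        _ ≤ Real.exp (-Δ) * ∑ m ∈ S, Real.exp (a m) := by rw [← Finset.mul_sum] at h2; exact h2
        _ ≤ Real.exp (-Δ) * T := by
            exact mul_le_mul_of_nonneg_left h3 (Real.exp_pos _).le
    rw [hα]
    rw [div_le_div_iff₀ hTpos hScard]
    nlinarith
  -- main norm bound
  have key : ‖(∑ m, α m • z m) - s‖
      ≤ ε + ((Sᶜ.card : ℝ) / (S.card : ℝ)) * R * Real.exp (-Δ) := by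
    have hrw : (∑ m, α m • z m) - s = ∑ m, α m • (z m - s) := by
      simp only [smul_sub, Finset.sum_sub_distrib, ← Finset.sum_smul, hαsum, one_smul]
    rw [hrw]
    calc ‖∑ m, α m • (z m - s)‖ ≤ ∑ m, ‖α m • (z m - s)‖ := norm_sum_le _ _
      _ = ∑ m, α m * ‖z m - s‖ := by
          refine Finset.sum_congr rfl fun m _ => ?_
          rw [norm_smul, Real.norm_eq_abs, abs_of_nonneg (hαnn m)]
      _ = (∑ m ∈ S, α m * ‖z m - s‖) + ∑ r ∈ Sᶜ, α r * ‖z r - s‖ :=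
          (Finset.sum_add_sum_compl S _).symm
      _ ≤ (∑ m ∈ S, α m * ε) + ∑ r ∈ Sᶜ, (Real.exp (-Δ) / (S.card : ℝ)) * R := by
          refine add_le_add (Finset.sum_le_sum fun m hm =>
            mul_le_mul_of_nonneg_left (h_in m hm) (hαnn m))
            (Finset.sum_le_sum fun r hr => ?_)
          rw [Finset.mem_compl] at hr
          exact mul_le_mul (hout_w r hr) (h_out r hr) (norm_nonneg _)
            (div_nonneg (Real.exp_pos _).le hScard.le)
      _ ≤ ε + ((Sᶜ.card : ℝ) / (S.card : ℝ)) * R * Real.exp (-Δ) := by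
          have h1 : ∑ m ∈ S, α m * ε ≤ ε := by
            rw [← Finset.sum_mul]
            have : ∑ m ∈ S, α m ≤ 1 := by
              rw [← hαsum]
              exact Finset.sum_le_sum_of_subset_of_nonneg (Finset.subset_univ S)
                fun k _ _ => hαnn k
            nlinarith
          have h2 : ∑ r ∈ Sᶜ, (Real.exp (-Δ) / (S.card : ℝ)) * R
              = ((Sᶜ.card : ℝ) / (S.card : ℝ)) * R * Real.exp (-Δ) := by
            rw [Finset.sum_const, nsmul_eq_mul]; ring
          linarith [h2.le]
  calc ‖F (∑ m, α m • z m) - F s‖ ≤ L_mod * ‖(∑ m, α m • z m) - s‖ := hF _ _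
    _ ≤ L_mod * (ε + ((Sᶜ.card : ℝ) / (S.card : ℝ)) * R * Real.exp (-Δ)) :=
        mul_le_mul_of_nonneg_left key hL
end

section
/- (Prediction preservation under the Theorem 1 bound.) Let E and E' be real normed vector spaces, K a positive integer. Let z : Fin M → E, a : Fin M → ℝ with softmax weights α m = exp(a m) / (∑_{k} exp(a k)), S ⊆ Fin M nonempty, Δ > 0 with a m ≥ a r + Δ for all m ∈ S, r ∉ S, and s ∈ E, ε ≥ 0, R ≥ 0 with ‖z m − s‖ ≤ ε for m ∈ S and ‖z r − s‖ ≤ R for r ∉ S. Let F : E → E' be Lipschitz with constant L_mod ≥ 0 and let h : E' → (Fin K → ℝ) have each coordinate Lipschitz with constant L_h ≥ 0. Set A = ∑_{m} α m · z m. If k ∈ Fin K satisfies, for all j ≠ k, h(F(s)) k − h(F(s)) j > 2 · L_h · L_mod · (ε + (|Sᶜ| / |S|) · R · exp(−Δ)), then h(F(A)) k > h(F(A)) j for all j ≠ k. -/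
/-- Prediction preservation under the Theorem 1 bound: if the clean-prompt logit margin
of class `k` exceeds `2·L_h·L_mod·(ε + (|Sᶜ|/|S|)·R·exp(−Δ))`, then the classifier makes
the same decision on the image-conditioned prompt `F(A)` as on the ideal prompt `F(s)`. -/
theorem prediction_preserved_under_attention_bound
    {E E' : Type*} [NormedAddCommGroup E] [NormedSpace ℝ E]
    [NormedAddCommGroup E'] [NormedSpace ℝ E']
    (K M : ℕ) (hK : 0 < K) (hM : 0 < M)
    (z : Fin M → E) (a : Fin M → ℝ)
    (S : Finset (Fin M)) (hS : S.Nonempty)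
    (Δ : ℝ) (hΔ : 0 < Δ)
    (hmargin : ∀ m ∈ S, ∀ r ∉ S, a r + Δ ≤ a m)
    (s : E) (ε R : ℝ) (hε : 0 ≤ ε) (hR : 0 ≤ R)
    (h_in : ∀ m ∈ S, ‖z m - s‖ ≤ ε)
    (h_out : ∀ r ∉ S, ‖z r - s‖ ≤ R)
    (F : E → E') (L_mod : ℝ) (hLmod : 0 ≤ L_mod)
    (hF : ∀ x y : E, ‖F x - F y‖ ≤ L_mod * ‖x - y‖)
    (h : E' → (Fin K → ℝ)) (L_h : ℝ) (hLh : 0 ≤ L_h)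
    (hLip : ∀ j : Fin K, ∀ x y : E', |h x j - h y j| ≤ L_h * ‖x - y‖)
    (k : Fin K)
    (hclean : ∀ j : Fin K, j ≠ k →
      h (F s) k - h (F s) j
        > 2 * L_h * L_mod * (ε + ((Sᶜ.card : ℝ) / (S.card : ℝ)) * R * Real.exp (-Δ))) :
    ∀ j : Fin K, j ≠ k →
      h (F (∑ m, (Real.exp (a m) / (∑ i, Real.exp (a i))) • z m)) k
        > h (F (∑ m, (Real.exp (a m) / (∑ i, Real.exp (a i))) • z m)) j := by
  intro j hj
  set Z := ∑ i, Real.exp (a i) with hZdef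
  have hZ : 0 < Z := Finset.sum_pos (fun i _ => Real.exp_pos _) ⟨⟨0, hM⟩, Finset.mem_univ _⟩
  set α : Fin M → ℝ := fun m => Real.exp (a m) / Z with hαdef
  have hα0 : ∀ m, 0 ≤ α m := fun m => div_nonneg (Real.exp_pos _).le hZ.le
  have hαsum : ∑ m, α m = 1 := by
    simp only [hαdef, ← Finset.sum_div]
    exact div_self hZ.ne'
  set A : E := ∑ m, α m • z m with hAdef
  have hScard : (0 : ℝ) < S.card := by exact_mod_cast Finset.card_pos.mpr hS
  -- bound on outer weights
  have hαout : ∀ r ∉ S, α r ≤ Real.exp (-Δ) / S.card := by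
    intro r hr
    have h1 : (S.card : ℝ) * Real.exp (a r) ≤ Real.exp (-Δ) * Z := by
      have : (S.card : ℝ) * Real.exp (a r) = ∑ m ∈ S, Real.exp (a r) := by
        simp [mul_comm]
      rw [this]
      calc ∑ m ∈ S, Real.exp (a r) ≤ ∑ m ∈ S, Real.exp (-Δ) * Real.exp (a m) := by
            apply Finset.sum_le_sum
            intro m hm
            rw [← Real.exp_add]
            exact Real.exp_le_exp.mpr (by linarith [hmargin m hm r hr])
        _ = Real.exp (-Δ) * ∑ m ∈ S, Real.exp (a m) := by rw [Finset.mul_sum]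
        _ ≤ Real.exp (-Δ) * Z := by
            apply mul_le_mul_of_nonneg_left _ (Real.exp_pos _).le
            exact Finset.sum_le_sum_of_subset_of_nonneg (Finset.subset_univ S)
              (fun i _ _ => (Real.exp_pos _).le)
    rw [hαdef]
    rw [div_le_div_iff₀ hZ hScard]
    nlinarith
  set B : ℝ := ε + ((Sᶜ.card : ℝ) / (S.card : ℝ)) * R * Real.exp (-Δ) with hBdef
  -- main distance bound
  have hAB : ‖A - s‖ ≤ B := by
    have hAs : A - s = ∑ m, α m • (z m - s) := by
      rw [hAdef]
      rw [Finset.sum_congr rfl (fun m _ => smul_sub (α m) (z m) s)]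
      rw [Finset.sum_sub_distrib, ← Finset.sum_smul, hαsum, one_smul]
    rw [hAs]
    calc ‖∑ m, α m • (z m - s)‖ ≤ ∑ m, ‖α m • (z m - s)‖ := norm_sum_le _ _
      _ = ∑ m, α m * ‖z m - s‖ := by
          apply Finset.sum_congr rfl
          intro m _
          rw [norm_smul, Real.norm_eq_abs, abs_of_nonneg (hα0 m)]
      _ = (∑ m ∈ S, α m * ‖z m - s‖) + ∑ m ∈ Sᶜ, α m * ‖z m - s‖ := by
          rw [← Finset.sum_add_sum_compl S]
      _ ≤ B := by
          rw [hBdef]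
          have h1 : ∑ m ∈ S, α m * ‖z m - s‖ ≤ ε := by
            calc ∑ m ∈ S, α m * ‖z m - s‖ ≤ ∑ m ∈ S, α m * ε := by
                  apply Finset.sum_le_sum
                  intro m hm
                  exact mul_le_mul_of_nonneg_left (h_in m hm) (hα0 m)
              _ = (∑ m ∈ S, α m) * ε := by rw [Finset.sum_mul]
              _ ≤ 1 * ε := by
                  apply mul_le_mul_of_nonneg_right _ hε
                  rw [← hαsum]
                  exact Finset.sum_le_sum_of_subset_of_nonneg (Finset.subset_univ S)
                    (fun i _ _ => hα0 i)
              _ = ε := one_mul ε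
          have h2 : ∑ m ∈ Sᶜ, α m * ‖z m - s‖ ≤
              ((Sᶜ.card : ℝ) / (S.card : ℝ)) * R * Real.exp (-Δ) := by
            calc ∑ m ∈ Sᶜ, α m * ‖z m - s‖
                ≤ ∑ m ∈ Sᶜ, (Real.exp (-Δ) / S.card) * R := by
                  apply Finset.sum_le_sum
                  intro m hm
                  have hm' : m ∉ S := Finset.mem_compl.mp hm
                  exact mul_le_mul (hαout m hm') (h_out m hm') (norm_nonneg _)
                    (div_nonneg (Real.exp_pos _).le hScard.le)
              _ = (Sᶜ.card : ℝ) * ((Real.exp (-Δ) / S.card) * R) := by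
                  rw [Finset.sum_const, nsmul_eq_mul]
              _ = ((Sᶜ.card : ℝ) / (S.card : ℝ)) * R * Real.exp (-Δ) := by ring
          linarith
  have hB0 : 0 ≤ B := le_trans (norm_nonneg _) hAB
  have hFA : ‖F A - F s‖ ≤ L_mod * B :=
    (hF A s).trans (mul_le_mul_of_nonneg_left hAB hLmod)
  have hk := (hLip k (F A) (F s)).trans (mul_le_mul_of_nonneg_left hFA hLh)
  have hjb := (hLip j (F A) (F s)).trans (mul_le_mul_of_nonneg_left hFA hLh)
  rw [abs_le] at hk hjb
  have hc := hclean j hj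
  have : h (F A) k - h (F A) j > 0 := by nlinarith [hk.1, hk.2, hjb.1, hjb.2]
  linarith
end

section
/- Let E be a real normed vector space, let d be a positive integer, and equip Fin d → ℝ with the sup norm ‖x‖ = max_i |x i|. Let σ(t) = 1/(1 + exp(−t)) be the sigmoid. Let c : Fin d → ℝ be fixed, let C̃ : E → (Fin d → ℝ) be Lipschitz with constant L₁ ≥ 0 and satisfy ‖C̃(A) − c‖ ≤ D for all A ∈ E and some D ≥ 0, and let φ_g : E → (Fin d → ℝ) be Lipschitz with constant L_g ≥ 0. Define the gate G(A) i = σ(φ_g(A) i) and the gated residual update U(A) = c + G(A) ⊙ (C̃(A) − c). Then U is Lipschitz with constant L₁ + (D · L_g)/4. -/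
/-!
The difference `U(A) - U(A')` splits as
`G(A) ⊙ (C̃(A) - C̃(A')) + (G(A) - G(A')) ⊙ (C̃(A') - c)`.
The sup norm on `Fin d → ℝ` is submultiplicative for `⊙`, the gate has norm at most `1`, and the
sigmoid is `1/4`-Lipschitz because its derivative `σ (1 - σ)` is at most `1/4`.
-/

open Real
open scoped NNReal

lemma abs_mul_one_sub_le_quarter {s : ℝ} (h₀ : 0 ≤ s) (h₁ : s ≤ 1) : |s * (1 - s)| ≤ 4⁻¹ := by
  rw [abs_of_nonneg (mul_nonneg h₀ (sub_nonneg.2 h₁))]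
  nlinarith [sq_nonneg (2 * s - 1)]

lemma lipschitzWith_sigmoid : LipschitzWith 4⁻¹ sigmoid := by
  refine lipschitzWith_of_nnnorm_deriv_le differentiable_sigmoid fun x => ?_
  rw [← NNReal.coe_le_coe, coe_nnnorm, deriv_sigmoid, Real.norm_eq_abs, NNReal.coe_inv]
  exact_mod_cast abs_mul_one_sub_le_quarter (sigmoid_nonneg x) (sigmoid_le_one x)

lemma LipschitzWith.compLeft {ι α β : Type*} [Fintype ι] [PseudoMetricSpace α]
    [PseudoMetricSpace β] {K : ℝ≥0} {f : α → β} (hf : LipschitzWith K f) :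
    LipschitzWith K (fun v : ι → α => f ∘ v) :=
  .of_dist_le_mul fun v w =>
    (dist_pi_le_iff (by positivity)).2 fun i =>
      (hf.dist_le_mul _ _).trans (by gcongr; exact dist_le_pi_dist v w i)

lemma norm_gatedResidual_sub_le {R : Type*} [NonUnitalSeminormedRing R] {g g' : R} (hg : ‖g‖ ≤ 1)
    (c x x' : R) :
    ‖(c + g * (x - c)) - (c + g' * (x' - c))‖ ≤ ‖x - x'‖ + ‖g - g'‖ * ‖x' - c‖ := by
  have hsplit : (c + g * (x - c)) - (c + g' * (x' - c)) = g * (x - x') + (g - g') * (x' - c) := by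
    noncomm_ring
  calc ‖(c + g * (x - c)) - (c + g' * (x' - c))‖
      ≤ ‖g‖ * ‖x - x'‖ + ‖g - g'‖ * ‖x' - c‖ :=
        hsplit ▸ (norm_add_le _ _).trans (add_le_add (norm_mul_le _ _) (norm_mul_le _ _))
    _ ≤ ‖x - x'‖ + ‖g - g'‖ * ‖x' - c‖ := by
        gcongr
        exact mul_le_of_le_one_left (norm_nonneg _) hg

lemma norm_sigmoid_comp_le_one {ι : Type*} [Fintype ι] (v : ι → ℝ) : ‖sigmoid ∘ v‖ ≤ 1 :=
  (pi_norm_le_iff_of_nonneg zero_le_one).2 fun i => by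
    simpa [abs_of_pos (sigmoid_pos _)] using sigmoid_le_one (v i)

theorem gated_residual_update_lipschitz_general
    {E : Type*} [NormedAddCommGroup E] [NormedSpace ℝ E]
    (d : ℕ) (c : Fin d → ℝ)
    (Ctil : E → (Fin d → ℝ)) (L₁ : ℝ)
    (hCtilLip : ∀ x y : E, ‖Ctil x - Ctil y‖ ≤ L₁ * ‖x - y‖)
    (D : ℝ) (hCtilBdd : ∀ A : E, ‖Ctil A - c‖ ≤ D)
    (φg : E → (Fin d → ℝ)) (Lg : ℝ)
    (hφg : ∀ x y : E, ‖φg x - φg y‖ ≤ Lg * ‖x - y‖) :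
    ∀ A A' : E,
      ‖(fun i => c i + (1 / (1 + Real.exp (-(φg A i)))) * (Ctil A i - c i))
        - (fun i => c i + (1 / (1 + Real.exp (-(φg A' i)))) * (Ctil A' i - c i))‖
        ≤ (L₁ + D * Lg / 4) * ‖A - A'‖ := by
  intro A A'
  set G : E → Fin d → ℝ := fun A => sigmoid ∘ φg A
  have hU : ∀ A, (fun i => c i + (1 / (1 + Real.exp (-(φg A i)))) * (Ctil A i - c i))
      = c + G A * (Ctil A - c) := fun A => by
    funext i; simp [G, sigmoid_def]
  have hG : ‖G A - G A'‖ ≤ 4⁻¹ * (Lg * ‖A - A'‖) := by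
    have h := lipschitzWith_sigmoid.compLeft.dist_le_mul (φg A) (φg A')
    rw [dist_eq_norm, dist_eq_norm, NNReal.coe_inv, NNReal.coe_ofNat] at h
    exact h.trans (by gcongr; exact hφg A A')
  rw [hU, hU]
  calc _ ≤ ‖Ctil A - Ctil A'‖ + ‖G A - G A'‖ * ‖Ctil A' - c‖ :=
        norm_gatedResidual_sub_le (norm_sigmoid_comp_le_one _) _ _ _
    _ ≤ L₁ * ‖A - A'‖ + 4⁻¹ * (Lg * ‖A - A'‖) * D :=
        add_le_add (hCtilLip A A')
          (mul_le_mul hG (hCtilBdd A') (norm_nonneg _) ((norm_nonneg _).trans hG))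
    _ = (L₁ + D * Lg / 4) * ‖A - A'‖ := by ring

/-- With the sup norm on `Fin d → ℝ`, sigmoid gate `G(A) = σ(φ_g(A))`, an
`L₁`-Lipschitz modulated context `C̃` staying within distance `D` of `c`, and an
`L_g`-Lipschitz gate mapping `φ_g`, the gated residual update
`U(A) = c + G(A) ⊙ (C̃(A) − c)` is Lipschitz with constant `L₁ + D·L_g/4`. -/
theorem gated_residual_update_lipschitz
    {E : Type*} [NormedAddCommGroup E] [NormedSpace ℝ E]
    (d : ℕ) (hd : 0 < d) (c : Fin d → ℝ)
    (Ctil : E → (Fin d → ℝ)) (L₁ : ℝ) (hL₁ : 0 ≤ L₁)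
    (hCtilLip : ∀ x y : E, ‖Ctil x - Ctil y‖ ≤ L₁ * ‖x - y‖)
    (D : ℝ) (hD : 0 ≤ D) (hCtilBdd : ∀ A : E, ‖Ctil A - c‖ ≤ D)
    (φg : E → (Fin d → ℝ)) (Lg : ℝ) (hLg : 0 ≤ Lg)
    (hφg : ∀ x y : E, ‖φg x - φg y‖ ≤ Lg * ‖x - y‖) :
    ∀ A A' : E,
      ‖(fun i => c i + (1 / (1 + Real.exp (-(φg A i)))) * (Ctil A i - c i))
        - (fun i => c i + (1 / (1 + Real.exp (-(φg A' i)))) * (Ctil A' i - c i))‖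
        ≤ (L₁ + D * Lg / 4) * ‖A - A'‖ :=
  gated_residual_update_lipschitz_general d c Ctil L₁ hCtilLip D hCtilBdd φg Lg hφg
end
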